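/- Suppose that, as n → ∞, the random vector (T_1^n, ..., T_w^n) converges in distribution to a vector of w independent and identically distributed random variables each having an atomless (continuous) distribution, and that (T̂_1^n, ..., T̂_w^n) is another sequence of random vectors, defined on the same probability spaces, such that T̂_j^n − T_j^n converges to 0 in probability for each 1 ≤ j ≤ w. Then P(T̂_1^n > T̂^n_{[1−α]}) → ⌊αw⌋/w as n → ∞. -/

import Mathlib

open MeasureTheory ProbabilityTheory Filter
open scoped ENNReal NNReal

/-!
By Slutsky's theorem `T̂ⁿ` converges in distribution to the same i.i.d. vector `X` as `Tⁿ`, so by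
the portmanteau theorem it suffices that the event `{x | x₁ > x_{[1-α]}}` has a null boundary
under the law of `X` and to compute its probability there. The ranks of the coordinates are
locally constant away from ties, and an atomless i.i.d. vector has no ties almost surely, so the
boundary is null. Without ties exactly `w - ⌈(1-α)w⌉ = ⌊αw⌋` coordinates exceed the order
statistic, and by exchangeability each coordinate does so with the same probability `⌊αw⌋/w`.
-/

/-- The `k`-th smallest value (1-indexed) among `T 0, ..., T (w-1)`. -/
noncomputable def orderStat {w : ℕ} (T : Fin w → ℝ) (k : ℕ) : ℝ :=
  if h : k - 1 < w then T (Tuple.sort T ⟨k - 1, h⟩) else 0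

/-- Convergence in distribution (weak convergence of laws). -/
def ConvInDist {Ω E : Type*} [MeasureSpace Ω] [TopologicalSpace E] [MeasurableSpace E]
    (X : ℕ → Ω → E) (μ : Measure E) : Prop :=
  ∀ f : BoundedContinuousFunction E ℝ,
    Tendsto (fun n => ∫ ω, f (X n ω)) atTop (nhds (∫ x, f x ∂μ))

open Finset Topology Function

lemma card_filter_comp_perm {ι α : Type*} [Fintype ι] (x : ι → α) (σ : Equiv.Perm ι)
    (p : α → Prop) [DecidablePred p] : #{i | p (x (σ i))} = #{i | p (x i)} :=
  card_equiv σ (by simp)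

section OrderStat

variable {w k : ℕ}

lemma orderStat_eq_apply_sort (x : Fin w → ℝ) (hk1 : 1 ≤ k) (hkw : k ≤ w) :
    orderStat x k = x (Tuple.sort x ⟨k - 1, by omega⟩) :=
  dif_pos _

lemma orderStat_mem_iff_le_card {s : Set ℝ} [DecidablePred (· ∈ s)] (hs : IsLowerSet s)
    (x : Fin w → ℝ) (hk1 : 1 ≤ k) (hkw : k ≤ w) :
    orderStat x k ∈ s ↔ k ≤ #{i | x i ∈ s} := by
  have hmono : Monotone (x ∘ Tuple.sort x) := Tuple.monotone_sort x
  set a : Fin w := ⟨k - 1, by omega⟩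
  rw [orderStat_eq_apply_sort x hk1 hkw, ← card_filter_comp_perm x (Tuple.sort x)]
  constructor
  · intro ha
    calc k = #(Iic a) := by simp [a]; omega
      _ ≤ _ := card_le_card fun l hl => by simpa using hs (hmono (mem_Iic.mp hl)) ha
  · intro hk
    by_contra ha
    have : #{l | x (Tuple.sort x l) ∈ s} ≤ #(Iio a) := card_le_card fun l hl => by
      simp only [mem_filter, mem_univ, true_and, mem_Iio] at hl ⊢
      by_contra hal
      exact ha (hs (hmono (not_lt.mp hal)) hl)
    simp [a] at this
    omega

lemma orderStat_le_iff (x : Fin w → ℝ) (hk1 : 1 ≤ k) (hkw : k ≤ w) (t : ℝ) :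
    orderStat x k ≤ t ↔ k ≤ #{i | x i ≤ t} := by
  simpa using orderStat_mem_iff_le_card (isLowerSet_Iic t) x hk1 hkw

lemma orderStat_lt_iff (x : Fin w → ℝ) (hk1 : 1 ≤ k) (hkw : k ≤ w) (t : ℝ) :
    orderStat x k < t ↔ k ≤ #{i | x i < t} := by
  simpa using orderStat_mem_iff_le_card (isLowerSet_Iio t) x hk1 hkw

lemma orderStat_le_add_of_forall_dist_le {x y : Fin w → ℝ} (hk1 : 1 ≤ k) (hkw : k ≤ w) {d : ℝ}
    (hd : ∀ i, dist (x i) (y i) ≤ d) : orderStat x k ≤ orderStat y k + d := by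
  rw [orderStat_le_iff x hk1 hkw]
  refine ((orderStat_le_iff y hk1 hkw _).mp le_rfl).trans (card_le_card fun i hi => ?_)
  simp only [mem_filter, mem_univ, true_and] at hi ⊢
  linarith [(abs_sub_le_iff.mp ((Real.dist_eq _ _).symm.trans_le (hd i))).1]

lemma lipschitzWith_orderStat (hk1 : 1 ≤ k) (hkw : k ≤ w) :
    LipschitzWith 1 (fun x : Fin w → ℝ => orderStat x k) := by
  refine LipschitzWith.of_dist_le_mul fun x y => ?_
  have hxy (i) : dist (x i) (y i) ≤ dist x y := dist_le_pi_dist x y i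
  have hyx (i) : dist (y i) (x i) ≤ dist x y := dist_comm x y ▸ dist_le_pi_dist y x i
  rw [NNReal.coe_one, one_mul, Real.dist_eq, abs_sub_le_iff]
  constructor
  · linarith [orderStat_le_add_of_forall_dist_le hk1 hkw hxy]
  · linarith [orderStat_le_add_of_forall_dist_le hk1 hkw hyx]

lemma orderStat_comp_perm (x : Fin w → ℝ) (τ : Equiv.Perm (Fin w)) (hk1 : 1 ≤ k) (hkw : k ≤ w) :
    orderStat (x ∘ τ) k = orderStat x k := by
  have hcard (t : ℝ) : #{i | (x ∘ τ) i ≤ t} = #{i | x i ≤ t} :=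
    card_filter_comp_perm x τ (· ≤ t)
  apply le_antisymm
  · rw [orderStat_le_iff _ hk1 hkw, hcard]
    exact (orderStat_le_iff x hk1 hkw _).mp le_rfl
  · rw [orderStat_le_iff x hk1 hkw, ← hcard]
    exact (orderStat_le_iff _ hk1 hkw _).mp le_rfl

lemma card_filter_orderStat_lt_of_injective {x : Fin w → ℝ} (hx : Injective x)
    (hk1 : 1 ≤ k) (hkw : k ≤ w) : #{i | orderStat x k < x i} = w - k := by
  have hmono : StrictMono (x ∘ Tuple.sort x) :=
    (Tuple.monotone_sort x).strictMono_of_injective (hx.comp (Tuple.sort x).injective)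
  rw [← card_filter_comp_perm x (Tuple.sort x), orderStat_eq_apply_sort x hk1 hkw]
  set a : Fin w := ⟨k - 1, by omega⟩
  have hlt (l : Fin w) : x (Tuple.sort x a) < x (Tuple.sort x l) ↔ a < l := hmono.lt_iff_lt
  simp_rw [hlt]
  rw [filter_lt_eq_Ioi, Fin.card_Ioi, Fin.val_mk]
  omega

end OrderStat

lemma notMem_frontier_of_eventually_mem_iff {X : Type*} [TopologicalSpace X] {s : Set X} {x : X}
    (h : ∀ᶠ y in 𝓝 x, y ∈ s ↔ x ∈ s) : x ∉ frontier s := by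
  have hint (t : Set X) (ht : t ∈ 𝓝 x) : x ∉ frontier t :=
    fun hx => hx.2 (mem_interior_iff_mem_nhds.2 ht)
  by_cases hxs : x ∈ s
  · exact hint s (h.mono fun y hy => hy.2 hxs)
  · rw [← frontier_compl]
    exact hint sᶜ (h.mono fun y hy => mt hy.1 hxs)

lemma eventually_card_filter_lt_eq {ι : Type*} [Fintype ι] {x : ι → ℝ} (hx : Injective x)
    (i : ι) : ∀ᶠ y in 𝓝 x, #{j | y j < y i} = #{j | x j < x i} := by
  have hcoord (j : ι) : ∀ᶠ y in 𝓝 x, (y j < y i ↔ x j < x i) := by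
    have hcont (l : ι) : Tendsto (fun y : ι → ℝ => y l) (𝓝 x) (𝓝 (x l)) :=
      (continuous_apply l).tendsto x
    rcases lt_trichotomy (x j) (x i) with h | h | h
    · filter_upwards [(hcont j).eventually_lt (hcont i) h] with y hy
      simp [h, hy]
    · simp [hx h]
    · filter_upwards [(hcont i).eventually_lt (hcont j) h] with y hy
      simp [h.not_gt, hy.not_gt]
  filter_upwards [eventually_all.2 hcoord] with y hy
  simp_rw [hy]

section Frontier

variable {w k : ℕ}

lemma isOpen_setOf_orderStat_lt (hk1 : 1 ≤ k) (hkw : k ≤ w) (i : Fin w) :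
    IsOpen {x : Fin w → ℝ | orderStat x k < x i} :=
  isOpen_lt (lipschitzWith_orderStat hk1 hkw).continuous (continuous_apply i)

/-- Away from ties the ranks of the coordinates are locally constant. -/
lemma frontier_setOf_orderStat_lt_subset (hk1 : 1 ≤ k) (hkw : k ≤ w) (i : Fin w) :
    frontier {x : Fin w → ℝ | orderStat x k < x i} ⊆ {x | ¬ Injective x} := by
  intro x hx hinj
  have hset : {x : Fin w → ℝ | orderStat x k < x i} = {x | k ≤ #{j | x j < x i}} := by
    ext y
    exact orderStat_lt_iff y hk1 hkw (y i)
  rw [hset] at hx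
  refine notMem_frontier_of_eventually_mem_iff ?_ hx
  filter_upwards [eventually_card_filter_lt_eq hinj i] with y hy
  simp [hy]

end Frontier

lemma measure_prod_setOf_fst_eq_snd (μ ν : Measure ℝ) [SFinite ν] [NullSingletonClass ν] :
    μ.prod ν {p : ℝ × ℝ | p.1 = p.2} = 0 := by
  rw [Measure.prod_apply (measurableSet_eq_fun measurable_fst measurable_snd)]
  simp

section ProductMeasure

variable {ι : Type*} [Fintype ι] (m : Measure ℝ) [IsProbabilityMeasure m]

lemma measure_pi_setOf_apply_eq_apply [NullSingletonClass m] {i j : ι} (hij : i ≠ j) :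
    Measure.pi (fun _ : ι => m) {x | x i = x j} = 0 := by
  have hind : IndepFun (fun x : ι → ℝ => x i) (fun x => x j) (Measure.pi fun _ => m) :=
    (iIndepFun_pi (X := fun _ : ι => (id : ℝ → ℝ)) fun _ => aemeasurable_id).indepFun hij
  rw [indepFun_iff_map_prod_eq_prod_map_map (measurable_pi_apply i).aemeasurable
    (measurable_pi_apply j).aemeasurable, (measurePreserving_eval _ i).map_eq,
    (measurePreserving_eval _ j).map_eq] at hind
  rw [← measure_prod_setOf_fst_eq_snd m m, ← hind, Measure.map_apply (by fun_prop)
    (measurableSet_eq_fun measurable_fst measurable_snd)]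
  rfl

lemma measure_pi_setOf_not_injective [NullSingletonClass m] :
    Measure.pi (fun _ : ι => m) {x | ¬ Injective x} = 0 := by
  have hsub : {x : ι → ℝ | ¬ Injective x} ⊆ ⋃ i, ⋃ j, ⋃ (_ : i ≠ j), {x | x i = x j} := by
    intro x hx
    simp only [Injective, not_forall] at hx
    obtain ⟨i, j, hxij, hij⟩ := hx
    simp only [Set.mem_iUnion]
    exact ⟨i, j, hij, hxij⟩
  refine measure_mono_null hsub (measure_iUnion_null fun i => measure_iUnion_null fun j =>
    measure_iUnion_null fun hij => measure_pi_setOf_apply_eq_apply m hij)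

lemma measurePreserving_comp_perm (τ : Equiv.Perm ι) :
    MeasurePreserving (fun x : ι → ℝ => x ∘ τ) (Measure.pi fun _ => m) (Measure.pi fun _ => m) := by
  convert measurePreserving_arrowCongr' (fun _ => m) (fun _ => m) τ.symm (MeasurableEquiv.refl ℝ)
    fun _ => MeasurePreserving.id m
  funext x
  simp [MeasurableEquiv.arrowCongr', Equiv.arrowCongr']

end ProductMeasure

section Symmetry

variable {w k : ℕ} (m : Measure ℝ) [IsProbabilityMeasure m]

lemma measure_pi_setOf_orderStat_lt_eq (hk1 : 1 ≤ k) (hkw : k ≤ w) (i j : Fin w) :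
    Measure.pi (fun _ => m) {x : Fin w → ℝ | orderStat x k < x i}
      = Measure.pi (fun _ => m) {x : Fin w → ℝ | orderStat x k < x j} := by
  have hpre : (fun x : Fin w → ℝ => x ∘ Equiv.swap i j) ⁻¹' {x | orderStat x k < x i}
      = {x | orderStat x k < x j} := by
    ext x
    simp [orderStat_comp_perm x _ hk1 hkw]
  rw [← hpre, (measurePreserving_comp_perm m _).measure_preimage
    (isOpen_setOf_orderStat_lt hk1 hkw i).measurableSet.nullMeasurableSet]

/-- Almost surely there are no ties, and then exactly `w - k` coordinates exceed the `k`-th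
order statistic. -/
lemma measure_pi_setOf_orderStat_lt [NullSingletonClass m] (hk1 : 1 ≤ k) (hkw : k ≤ w)
    (i : Fin w) :
    Measure.pi (fun _ => m) {x : Fin w → ℝ | orderStat x k < x i} = (w - k : ℕ) / w := by
  set μ := Measure.pi fun _ : Fin w => m
  set A : Fin w → Set (Fin w → ℝ) := fun j => {x | orderStat x k < x j}
  have hA (j : Fin w) : MeasurableSet (A j) := (isOpen_setOf_orderStat_lt hk1 hkw j).measurableSet
  have hcount : (fun x => ∑ j, (A j).indicator 1 x) =ᵐ[μ] fun _ => ((w - k : ℕ) : ℝ≥0∞) := by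
    refine ae_iff.2 (measure_mono_null (fun x hx => ?_) (measure_pi_setOf_not_injective m))
    refine fun hinj => hx ?_
    simp only [Set.indicator_apply, A, Set.mem_ofPred_eq, Pi.one_apply, sum_boole]
    rw [card_filter_orderStat_lt_of_injective hinj hk1 hkw]
  have hsum : ∑ j, μ (A j) = (w - k : ℕ) := by
    simp_rw [← lintegral_indicator_one (hA _)]
    rw [← lintegral_finsetSum _ fun j _ => measurable_one.indicator (hA j),
      lintegral_congr_ae hcount, lintegral_const, measure_univ, mul_one]
  rw [Fintype.sum_congr _ _ fun j => measure_pi_setOf_orderStat_lt_eq m hk1 hkw j i] at hsum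
  rw [sum_const, card_univ, Fintype.card_fin, nsmul_eq_mul] at hsum
  exact (ENNReal.eq_div_iff (by simp; omega) (by simp)).2 hsum

end Symmetry

lemma tendstoInMeasure_pi {Ω ι γ : Type*} [MeasurableSpace Ω] {μ : Measure Ω} [Fintype ι]
    {E : ι → Type*} [∀ j, PseudoEMetricSpace (E j)] {l : Filter γ} {f : γ → Ω → ∀ j, E j}
    {g : Ω → ∀ j, E j} (h : ∀ j, TendstoInMeasure μ (fun n ω => f n ω j) l (fun ω => g ω j)) :
    TendstoInMeasure μ f l g := by
  intro ε hε
  have hsub (n : γ) :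
      {ω | ε ≤ edist (f n ω) (g ω)} ⊆ ⋃ j, {ω | ε ≤ edist (f n ω j) (g ω j)} := by
    intro ω hω
    simp only [Set.mem_iUnion, Set.mem_ofPred_eq]
    by_contra! hlt
    exact not_lt.2 hω (edist_pi_def (f n ω) (g ω) ▸ (Finset.sup_lt_iff hε).2 fun j _ => hlt j)
  refine tendsto_of_tendsto_of_tendsto_of_le_of_le tendsto_const_nhds
    (by simpa using tendsto_finsetSum univ fun j _ => h j ε hε) (fun _ => zero_le)
    fun n => (measure_mono (hsub n)).trans (measure_iUnion_fintype_le _ _)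

lemma ConvInDist.tendstoInDistribution {Ω E : Type*} [MeasureSpace Ω]
    [IsProbabilityMeasure (ℙ : Measure Ω)] [TopologicalSpace E] [MeasurableSpace E]
    [OpensMeasurableSpace E] {X : ℕ → Ω → E} {μ : Measure E} [IsProbabilityMeasure μ]
    (h : ConvInDist X μ) (hX : ∀ n, AEMeasurable (X n)) :
    TendstoInDistribution X atTop id (fun _ => ℙ) μ where
  forall_aemeasurable := hX
  aemeasurable_limit := aemeasurable_id
  tendsto := by
    refine ProbabilityMeasure.tendsto_iff_forall_integral_tendsto.2 fun f => ?_
    simpa [integral_map (hX _) f.continuous.aestronglyMeasurable] using h f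

lemma cast_sub_ceil_one_sub_mul_eq_floor (w : ℕ) {α : ℝ} (hα0 : 0 ≤ α) (hα1 : α ≤ 1) :
    ((w - ⌈(1 - α) * w⌉₊ : ℕ) : ℤ) = ⌊α * w⌋ := by
  have hceil : (⌈(1 - α) * w⌉₊ : ℤ) = w - ⌊α * w⌋ := by
    rw [Int.natCast_ceil_eq_ceil (by nlinarith [(w.cast_nonneg : (0 : ℝ) ≤ w)])]
    rw [show (1 - α) * w = -(α * w) + ((w : ℤ) : ℝ) by push_cast; ring, Int.ceil_add_intCast,
      Int.ceil_neg]
    ring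
  have hfloor : ⌊α * w⌋ ≤ w := Int.floor_le_iff.2 (by push_cast; nlinarith)
  have hfloor0 : 0 ≤ ⌊α * w⌋ := Int.floor_nonneg.2 (by positivity)
  omega

theorem statement12_general
    {Ω : Type*} [MeasureSpace Ω] [IsProbabilityMeasure (ℙ : Measure Ω)]
    (w : ℕ) [NeZero w] (α : ℝ) (hα : α ∈ Set.Ico (0 : ℝ) 1)
    (T That : ℕ → Ω → Fin w → ℝ)
    (hT_meas : ∀ n, Measurable (T n)) (hThat_meas : ∀ n, Measurable (That n))
    (m : Measure ℝ) [IsProbabilityMeasure m]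
    (hm_atomless : ∀ x : ℝ, m {x} = 0)
    (hconv : ConvInDist T (Measure.pi fun _ : Fin w => m))
    (hclose : ∀ j : Fin w,
      TendstoInMeasure ℙ (fun n ω => That n ω j - T n ω j) atTop (fun _ => 0)) :
    Tendsto (fun n =>
        (ℙ {ω | That n ω 0 > orderStat (That n ω) ⌈(1 - α) * (w : ℝ)⌉₊}).toReal)
      atTop (nhds ((⌊α * (w : ℝ)⌋ : ℝ) / w)) := by
  obtain ⟨hα0, hα1⟩ := hα
  have : NullSingletonClass m := ⟨hm_atomless⟩
  have hw0 : (0 : ℝ) < w := Nat.cast_pos.2 (Nat.pos_of_neZero w)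
  set k := ⌈(1 - α) * (w : ℝ)⌉₊
  have hk1 : 1 ≤ k := Nat.ceil_pos.2 (by nlinarith)
  have hkw : k ≤ w := Nat.ceil_le.2 (by nlinarith)
  have hlaw : TendstoInDistribution That atTop id (fun _ => ℙ) (Measure.pi fun _ => m) :=
    tendstoInDistribution_of_tendstoInMeasure_sub That id
      (hconv.tendstoInDistribution fun n => (hT_meas n).aemeasurable)
      (tendstoInMeasure_pi hclose) fun n => (hThat_meas n).aemeasurable
  have hlim := ProbabilityMeasure.tendsto_measure_of_null_frontier_of_tendsto' hlaw.tendsto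
    (E := {x | orderStat x k < x 0}) (by
      simpa using measure_mono_null (frontier_setOf_orderStat_lt_subset hk1 hkw 0)
        (measure_pi_setOf_not_injective m))
  simp only [ProbabilityMeasure.coe_mk, Measure.map_id, Measure.map_apply (hThat_meas _)
    (isOpen_setOf_orderStat_lt hk1 hkw 0).measurableSet] at hlim
  have hvalue : (Measure.pi (fun _ => m) {x : Fin w → ℝ | orderStat x k < x 0}).toReal
      = (⌊α * (w : ℝ)⌋ : ℝ) / w := by
    rw [measure_pi_setOf_orderStat_lt m hk1 hkw 0, ENNReal.toReal_div, ENNReal.toReal_natCast,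
      ENNReal.toReal_natCast, ← Int.cast_natCast, cast_sub_ceil_one_sub_mul_eq_floor w hα0 hα1.le]
  rw [← hvalue]
  exact (ENNReal.tendsto_toReal (measure_ne_top _ _)).comp hlim

/-- If `(T_1^n, ..., T_w^n)` converges in distribution to a vector of i.i.d. variables
with a common atomless law, and `T̂_j^n - T_j^n → 0` in probability for each `j`, then
`P(T̂_1^n > T̂^n_{[1-α]}) → ⌊αw⌋/w`. -/
theorem statement12
    {Ω : Type*} [MeasureSpace Ω] [IsProbabilityMeasure (ℙ : Measure Ω)]
    (w : ℕ) [NeZero w] (hw : 2 ≤ w) (α : ℝ) (hα : α ∈ Set.Ico (0 : ℝ) 1)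
    (T That : ℕ → Ω → Fin w → ℝ)
    (hT_meas : ∀ n, Measurable (T n)) (hThat_meas : ∀ n, Measurable (That n))
    (m : Measure ℝ) [IsProbabilityMeasure m]
    (hm_atomless : ∀ x : ℝ, m {x} = 0)
    (hconv : ConvInDist T (Measure.pi fun _ : Fin w => m))
    (hclose : ∀ j : Fin w,
      TendstoInMeasure ℙ (fun n ω => That n ω j - T n ω j) atTop (fun _ => 0)) :
    Tendsto (fun n =>
        (ℙ {ω | That n ω 0 > orderStat (That n ω) ⌈(1 - α) * (w : ℝ)⌉₊}).toReal)
      atTop (nhds ((⌊α * (w : ℝ)⌋ : ℝ) / w)) :=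
  statement12_general w α hα T That hT_meas hThat_meas m hm_atomless hconv hclose
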